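/- arXiv:2407.08951 — 3 statements merged into one kernel-verified Lean document; each statement's English description precedes it below -/
import Mathlib

section
/- The multiplicative update of the allocation matrix does not increase the regularized cost: with all entries of z, t, v strictly positive, c entrywise nonnegative, p entrywise nonnegative, μ ≥ 0, a fixed assignment b : Fin K → Fin B, and with ∑_{i,j} t(i,k)·v(j,k) + μ > 0 for every k, define z'(a,k) = ( z(a,k)·∑_{i,j} c(a,i,j)·t(i,k)·v(j,k)/m(a,i,j) + μ·p(b(k),a) ) / ( ∑_{i,j} t(i,k)·v(j,k) + μ ). If all entries z'(a,k) are strictly positive, then J(z',t,v,b) ≤ J(z,t,v,b). -/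
/-!
Majorization–minimization. For fixed `t, v`, concavity of `log` (Jensen with the weights
`z(a,k)·t(i,k)·v(j,k) / m(a,i,j)`) bounds the data term of `J(z', t, v, b) - J(z, t, v, b)` by a
function that separates over the entries of `z'`; the regularization term already does. Writing
`β_k = ∑_{i,j} t(i,k)·v(j,k) + μ`, the update rule says precisely that the coefficient of
`-log (z'(a,k) / z(a,k))` in that bound is `β_k·z'(a,k)`, so the bound collapses to
`-∑_{a,k} β_k·D(z'(a,k) | z(a,k)) ≤ 0`.
-/

open Finset Real

/-- Generalized Kullback–Leibler divergence `D(b|a) = b·log(b/a) + a − b`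
(with the convention `0·log 0 = 0`, automatic since `Real.log 0 = 0`). -/
noncomputable def klD (q a : ℝ) : ℝ := q * Real.log (q / a) + a - q

/-- NTF model `m(a,i,j) = ∑ k, z(a,k)·t(i,k)·v(j,k)`. -/
noncomputable def ntfModel {A I J K : ℕ}
    (z : Fin A → Fin K → ℝ) (t : Fin I → Fin K → ℝ) (v : Fin J → Fin K → ℝ)
    (a : Fin A) (i : Fin I) (j : Fin J) : ℝ :=
  ∑ k, z a k * t i k * v j k

/-- Regularized cost
`J(z,t,v,b) = ∑_{a,i,j} D(c(a,i,j)|m(a,i,j)) + μ·∑_k ∑_a D(p(b(k),a)|z(a,k))`. -/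
noncomputable def ntfCost {A I J K B : ℕ}
    (c : Fin A → Fin I → Fin J → ℝ) (μ : ℝ) (p : Fin B → Fin A → ℝ)
    (z : Fin A → Fin K → ℝ) (t : Fin I → Fin K → ℝ) (v : Fin J → Fin K → ℝ)
    (b : Fin K → Fin B) : ℝ :=
  (∑ a, ∑ i, ∑ j, klD (c a i j) (ntfModel z t v a i j)) +
    μ * ∑ k, ∑ a, klD (p (b k) a) (z a k)

theorem klD_eq_mul_klFun (q : ℝ) {x : ℝ} (hx : 0 < x) :
    klD q x = x * InformationTheory.klFun (q / x) := by
  rw [klD, InformationTheory.klFun_apply]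
  field_simp

theorem klD_nonneg {q x : ℝ} (hq : 0 ≤ q) (hx : 0 < x) : 0 ≤ klD q x := by
  rw [klD_eq_mul_klFun q hx]
  exact mul_nonneg hx.le (InformationTheory.klFun_nonneg (div_nonneg hq hx.le))

theorem klD_sub_klD (q : ℝ) {x y : ℝ} (hx : x ≠ 0) (hy : y ≠ 0) :
    klD q y - klD q x = (y - x) - q * log (y / x) := by
  rcases eq_or_ne q 0 with rfl | hq
  · simp [klD]
  · rw [klD, klD, log_div hq hx, log_div hq hy, log_div hy hx]
    ring

theorem sum_div_mul_log_div_le_log_div {ι : Type*} [Fintype ι] [Nonempty ι] {x y : ι → ℝ}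
    (hx : ∀ k, 0 < x k) (hy : ∀ k, 0 < y k) :
    ∑ k, x k / (∑ l, x l) * log (y k / x k) ≤ log ((∑ k, y k) / ∑ k, x k) := by
  have hX : 0 < ∑ l, x l := sum_pos (fun k _ ↦ hx k) univ_nonempty
  have hmean : ∑ k, x k / (∑ l, x l) * (y k / x k) = (∑ k, y k) / ∑ k, x k := by
    rw [sum_div]
    refine sum_congr rfl fun k _ ↦ ?_
    field_simp [(hx k).ne']
  rw [← hmean]
  exact strictConcaveOn_log_Ioi.concaveOn.le_map_sum
    (fun k _ ↦ (div_pos (hx k) hX).le) (by rw [← sum_div, div_self hX.ne'])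
    (fun k _ ↦ Set.mem_Ioi.2 (div_pos (hy k) (hx k)))

theorem klD_sum_mul_sub_le {ι : Type*} [Fintype ι] {q : ℝ} (hq : 0 ≤ q) {x x' w : ι → ℝ}
    (hx : ∀ k, 0 < x k) (hx' : ∀ k, 0 < x' k) (hw : ∀ k, 0 < w k) :
    klD q (∑ k, x' k * w k) - klD q (∑ k, x k * w k) ≤
      ∑ k, ((x' k - x k) * w k - x k * (q * w k / ∑ l, x l * w l) * log (x' k / x k)) := by
  cases isEmpty_or_nonempty ι
  · simp
  have hm : 0 < ∑ k, x k * w k := sum_pos (fun k _ ↦ mul_pos (hx k) (hw k)) univ_nonempty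
  have hm' : 0 < ∑ k, x' k * w k := sum_pos (fun k _ ↦ mul_pos (hx' k) (hw k)) univ_nonempty
  have hjensen := sum_div_mul_log_div_le_log_div (fun k ↦ mul_pos (hx k) (hw k))
    (fun k ↦ mul_pos (hx' k) (hw k))
  have hratio : ∀ k, x' k * w k / (x k * w k) = x' k / x k := fun k ↦
    mul_div_mul_right _ _ (hw k).ne'
  simp only [hratio] at hjensen
  have hrhs : ∑ k, ((x' k - x k) * w k - x k * (q * w k / ∑ l, x l * w l) * log (x' k / x k)) =
      ((∑ k, x' k * w k) - ∑ k, x k * w k) -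
        q * ∑ k, x k * w k / (∑ l, x l * w l) * log (x' k / x k) := by
    rw [mul_sum, ← sum_sub_distrib, ← sum_sub_distrib]
    refine sum_congr rfl fun k _ ↦ ?_
    ring
  rw [klD_sub_klD q hm.ne' hm'.ne', hrhs]
  linarith [mul_le_mul_of_nonneg_left hjensen hq]

section NTF

variable {A I J K B : ℕ} {z z' : Fin A → Fin K → ℝ} {t : Fin I → Fin K → ℝ}
  {v : Fin J → Fin K → ℝ} {c : Fin A → Fin I → Fin J → ℝ}

theorem sum_klD_ntfModel_sub_le (hz : ∀ a k, 0 < z a k) (hz' : ∀ a k, 0 < z' a k)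
    (ht : ∀ i k, 0 < t i k) (hv : ∀ j k, 0 < v j k) (hc : ∀ a i j, 0 ≤ c a i j) :
    (∑ a, ∑ i, ∑ j, klD (c a i j) (ntfModel z' t v a i j)) -
        ∑ a, ∑ i, ∑ j, klD (c a i j) (ntfModel z t v a i j) ≤
      ∑ a, ∑ k, ((z' a k - z a k) * ∑ i, ∑ j, t i k * v j k -
        z a k * (∑ i, ∑ j, c a i j * t i k * v j k / ntfModel z t v a i j) *
          log (z' a k / z a k)) := by
  rw [← sum_sub_distrib]
  refine sum_le_sum fun a _ ↦ ?_
  calc (∑ i, ∑ j, klD (c a i j) (ntfModel z' t v a i j)) -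
        ∑ i, ∑ j, klD (c a i j) (ntfModel z t v a i j)
      = ∑ i, ∑ j, (klD (c a i j) (ntfModel z' t v a i j) -
          klD (c a i j) (ntfModel z t v a i j)) := by simp only [sum_sub_distrib]
    _ ≤ ∑ i, ∑ j, ∑ k, ((z' a k - z a k) * (t i k * v j k) -
          z a k * (c a i j * t i k * v j k / ntfModel z t v a i j) *
            log (z' a k / z a k)) := by
        refine sum_le_sum fun i _ ↦ sum_le_sum fun j _ ↦ ?_
        simpa only [ntfModel, mul_assoc] using klD_sum_mul_sub_le (hc a i j) (hz a) (hz' a)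
          (fun k ↦ mul_pos (ht i k) (hv j k))
    _ = ∑ k, ∑ i, ∑ j, ((z' a k - z a k) * (t i k * v j k) -
          z a k * (c a i j * t i k * v j k / ntfModel z t v a i j) *
            log (z' a k / z a k)) := by
        rw [sum_congr rfl fun i _ ↦ sum_comm, sum_comm]
    _ = _ := by simp only [sum_sub_distrib, ← mul_sum, ← sum_mul]

theorem sum_klD_sub_eq (hz : ∀ a k, 0 < z a k) (hz' : ∀ a k, 0 < z' a k)
    (q : Fin A → Fin K → ℝ) :
    (∑ k, ∑ a, klD (q a k) (z' a k)) - ∑ k, ∑ a, klD (q a k) (z a k) =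
      ∑ a, ∑ k, ((z' a k - z a k) - q a k * log (z' a k / z a k)) := by
  rw [sum_comm (γ := Fin A)]
  simp only [← sum_sub_distrib, klD_sub_klD _ (hz _ _).ne' (hz' _ _).ne']

theorem ntfCost_le_add_sum (hz : ∀ a k, 0 < z a k) (hz' : ∀ a k, 0 < z' a k)
    (ht : ∀ i k, 0 < t i k) (hv : ∀ j k, 0 < v j k) (hc : ∀ a i j, 0 ≤ c a i j)
    (p : Fin B → Fin A → ℝ) (μ : ℝ) (b : Fin K → Fin B) :
    ntfCost c μ p z' t v b ≤ ntfCost c μ p z t v b +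
      ∑ a, ∑ k, (((∑ i, ∑ j, t i k * v j k) + μ) * (z' a k - z a k) -
        (z a k * (∑ i, ∑ j, c a i j * t i k * v j k / ntfModel z t v a i j) +
          μ * p (b k) a) * log (z' a k / z a k)) := by
  have hdata := sum_klD_ntfModel_sub_le hz hz' ht hv hc
  have hreg := sum_klD_sub_eq hz hz' fun a k ↦ p (b k) a
  have hsum : ∑ a, ∑ k, (((∑ i, ∑ j, t i k * v j k) + μ) * (z' a k - z a k) -
        (z a k * (∑ i, ∑ j, c a i j * t i k * v j k / ntfModel z t v a i j) +
          μ * p (b k) a) * log (z' a k / z a k)) =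
      ∑ a, ∑ k, ((z' a k - z a k) * ∑ i, ∑ j, t i k * v j k -
        z a k * (∑ i, ∑ j, c a i j * t i k * v j k / ntfModel z t v a i j) *
          log (z' a k / z a k)) +
      μ * ∑ a, ∑ k, ((z' a k - z a k) - p (b k) a * log (z' a k / z a k)) := by
    rw [mul_sum, ← sum_add_distrib]
    refine sum_congr rfl fun a _ ↦ ?_
    rw [mul_sum, ← sum_add_distrib]
    refine sum_congr rfl fun k _ ↦ ?_
    ring
  rw [hsum, ← hreg, ntfCost, ntfCost]
  linarith

end NTF

theorem stmt2_general (A I J K B : ℕ)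
    (z : Fin A → Fin K → ℝ) (t : Fin I → Fin K → ℝ) (v : Fin J → Fin K → ℝ)
    (hz : ∀ a k, 0 < z a k) (ht : ∀ i k, 0 < t i k) (hv : ∀ j k, 0 < v j k)
    (c : Fin A → Fin I → Fin J → ℝ) (hc : ∀ a i j, 0 ≤ c a i j)
    (p : Fin B → Fin A → ℝ)
    (μ : ℝ)
    (b : Fin K → Fin B)
    (hden : ∀ k : Fin K, 0 < (∑ i, ∑ j, t i k * v j k) + μ)
    (z' : Fin A → Fin K → ℝ)
    (hz'def : ∀ a k, z' a k =
      (z a k * ∑ i, ∑ j, c a i j * t i k * v j k / ntfModel z t v a i j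
        + μ * p (b k) a) / ((∑ i, ∑ j, t i k * v j k) + μ))
    (hz' : ∀ a k, 0 < z' a k) :
    ntfCost c μ p z' t v b ≤ ntfCost c μ p z t v b := by
  refine (ntfCost_le_add_sum hz hz' ht hv hc p μ b).trans
    (add_le_of_nonpos_right (sum_nonpos fun a _ ↦ sum_nonpos fun k _ ↦ ?_))
  set β := (∑ i, ∑ j, t i k * v j k) + μ
  have hnum : z a k * (∑ i, ∑ j, c a i j * t i k * v j k / ntfModel z t v a i j) +
      μ * p (b k) a = β * z' a k := by
    rw [hz'def, mul_div_cancel₀ _ (hden k).ne']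
  rw [hnum]
  calc β * (z' a k - z a k) - β * z' a k * log (z' a k / z a k)
      = -(β * klD (z' a k) (z a k)) := by rw [klD]; ring
    _ ≤ 0 := neg_nonpos.2 (mul_nonneg (hden k).le (klD_nonneg (hz' a k).le (hz a k)))

/-- The multiplicative update of the allocation matrix does not increase the
regularized cost. -/
theorem stmt2 (A I J K B : ℕ)
    (z : Fin A → Fin K → ℝ) (t : Fin I → Fin K → ℝ) (v : Fin J → Fin K → ℝ)
    (hz : ∀ a k, 0 < z a k) (ht : ∀ i k, 0 < t i k) (hv : ∀ j k, 0 < v j k)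
    (c : Fin A → Fin I → Fin J → ℝ) (hc : ∀ a i j, 0 ≤ c a i j)
    (p : Fin B → Fin A → ℝ) (hp : ∀ b a, 0 ≤ p b a)
    (μ : ℝ) (hμ : 0 ≤ μ)
    (b : Fin K → Fin B)
    (hden : ∀ k : Fin K, 0 < (∑ i, ∑ j, t i k * v j k) + μ)
    (z' : Fin A → Fin K → ℝ)
    (hz'def : ∀ a k, z' a k =
      (z a k * ∑ i, ∑ j, c a i j * t i k * v j k / ntfModel z t v a i j
        + μ * p (b k) a) / ((∑ i, ∑ j, t i k * v j k) + μ))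
    (hz' : ∀ a k, 0 < z' a k) :
    ntfCost c μ p z' t v b ≤ ntfCost c μ p z t v b :=
  stmt2_general A I J K B z t v hz ht hv c hc p μ b hden z' hz'def hz'
end

section
/- The multiplicative update of the basis matrix does not increase the data-fit cost: with all entries of z, t, v strictly positive and c entrywise nonnegative, define t'(i,k) = t(i,k) · ( ∑_{a,j} c(a,i,j)·z(a,k)·v(j,k)/m(a,i,j) ) / ( ∑_{a,j} z(a,k)·v(j,k) ). If all entries t'(i,k) are strictly positive, then ∑_{a,i,j} D(c(a,i,j) | ∑_{k} z(a,k)·t'(i,k)·v(j,k)) ≤ ∑_{a,i,j} D(c(a,i,j) | m(a,i,j)). -/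
open Finset Real

/-- Auxiliary: commuting a fourfold sum. -/
theorem sum_comm4 {M : Type*} [AddCommMonoid M] {A I J K : ℕ}
    (f : Fin A → Fin I → Fin J → Fin K → M) :
    ∑ a, ∑ i, ∑ j, ∑ k, f a i j k = ∑ i, ∑ k, ∑ a, ∑ j, f a i j k := by
  rw [Finset.sum_comm]
  refine Finset.sum_congr rfl fun i _ => ?_
  calc ∑ a, ∑ j, ∑ k, f a i j k
      = ∑ a, ∑ k, ∑ j, f a i j k :=
        Finset.sum_congr rfl fun a _ => Finset.sum_comm
    _ = ∑ k, ∑ a, ∑ j, f a i j k := Finset.sum_comm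

/-- Auxiliary: `r log r - r + 1 ≥ 0` for `r > 0`. -/
theorem rlogr_nonneg {r : ℝ} (hr : 0 < r) : 0 ≤ r * Real.log r - r + 1 := by
  have h := Real.log_le_sub_one_of_pos (show (0:ℝ) < 1 / r by positivity)
  rw [Real.log_div one_ne_zero hr.ne', Real.log_one] at h
  have h' : -Real.log r ≤ 1 / r - 1 := by linarith
  have := mul_le_mul_of_nonneg_left h' hr.le
  have hrr : r * (1 / r) = 1 := by field_simp
  nlinarith

/-- The multiplicative update of the basis matrix does not increase the
data-fit cost. -/
theorem stmt3 (A I J K : ℕ)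
    (z : Fin A → Fin K → ℝ) (t : Fin I → Fin K → ℝ) (v : Fin J → Fin K → ℝ)
    (hz : ∀ a k, 0 < z a k) (ht : ∀ i k, 0 < t i k) (hv : ∀ j k, 0 < v j k)
    (c : Fin A → Fin I → Fin J → ℝ) (hc : ∀ a i j, 0 ≤ c a i j)
    (t' : Fin I → Fin K → ℝ)
    (ht'def : ∀ i k, t' i k =
      t i k * (∑ a, ∑ j, c a i j * z a k * v j k / ntfModel z t v a i j) /
        (∑ a, ∑ j, z a k * v j k))
    (ht' : ∀ i k, 0 < t' i k) :
    ∑ a, ∑ i, ∑ j, klD (c a i j) (ntfModel z t' v a i j) ≤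
      ∑ a, ∑ i, ∑ j, klD (c a i j) (ntfModel z t v a i j) := by
  rcases Nat.eq_zero_or_pos K with hK | hK
  · subst hK; simp [ntfModel]
  rcases Nat.eq_zero_or_pos A with hA | hA
  · subst hA; simp
  rcases Nat.eq_zero_or_pos J with hJ | hJ
  · subst hJ; simp
  haveI : Nonempty (Fin K) := ⟨⟨0, hK⟩⟩
  haveI : Nonempty (Fin A) := ⟨⟨0, hA⟩⟩
  haveI : Nonempty (Fin J) := ⟨⟨0, hJ⟩⟩
  have hm : ∀ a i j, 0 < ntfModel z t v a i j := fun a i j =>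
    Finset.sum_pos (fun k _ => mul_pos (mul_pos (hz a k) (ht i k)) (hv j k)) Finset.univ_nonempty
  have hm' : ∀ a i j, 0 < ntfModel z t' v a i j := fun a i j =>
    Finset.sum_pos (fun k _ => mul_pos (mul_pos (hz a k) (ht' i k)) (hv j k)) Finset.univ_nonempty
  set W : Fin K → ℝ := fun k => ∑ a, ∑ j, z a k * v j k with hWdef
  set S : Fin I → Fin K → ℝ :=
    fun i k => ∑ a, ∑ j, c a i j * z a k * v j k / ntfModel z t v a i j with hSdef
  have hW : ∀ k, 0 < W k := fun k =>
    Finset.sum_pos (fun a _ =>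
      Finset.sum_pos (fun j _ => mul_pos (hz a k) (hv j k)) Finset.univ_nonempty)
      Finset.univ_nonempty
  have ht'eq : ∀ i k, t' i k = t i k * S i k / W k := ht'def
  have hS : ∀ i k, 0 < S i k := by
    intro i k
    have hval : t' i k * W k / t i k = S i k := by
      rw [ht'eq i k, div_mul_cancel₀ _ (hW k).ne', mul_div_cancel_left₀ _ (ht i k).ne']
    rw [← hval]
    exact div_pos (mul_pos (ht' i k) (hW k)) (ht i k)
  -- Jensen's inequality per triple
  have jensen : ∀ a i j, (∑ k, z a k * t i k * v j k / ntfModel z t v a i j *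
      Real.log (t' i k / t i k)) ≤
      Real.log (ntfModel z t' v a i j / ntfModel z t v a i j) := by
    intro a i j
    set m := ntfModel z t v a i j with hmdef
    have hmpos := hm a i j
    have key := strictConcaveOn_log_Ioi.concaveOn.le_map_sum
      (t := (Finset.univ : Finset (Fin K)))
      (w := fun k => z a k * t i k * v j k / m)
      (p := fun k => t' i k / t i k)
      (fun k _ => le_of_lt (div_pos (mul_pos (mul_pos (hz a k) (ht i k)) (hv j k)) hmpos))
      (by
        rw [← Finset.sum_div]
        exact div_self hmpos.ne')
      (fun k _ => Set.mem_Ioi.mpr (div_pos (ht' i k) (ht i k)))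
    simp only [smul_eq_mul] at key
    have hrw : ∑ k, z a k * t i k * v j k / m * (t' i k / t i k) =
        ntfModel z t' v a i j / m := by
      rw [show ntfModel z t' v a i j = ∑ k, z a k * t' i k * v j k from rfl,
        Finset.sum_div]
      refine Finset.sum_congr rfl fun k _ => ?_
      have h1 := (ht i k).ne'
      field_simp
    rw [hrw] at key
    exact key
  -- Per-triple key inequality
  have key : ∀ a i j, klD (c a i j) (ntfModel z t' v a i j) +
      (c a i j * (∑ k, z a k * t i k * v j k / ntfModel z t v a i j *
        Real.log (t' i k / t i k)) +
        (ntfModel z t v a i j - ntfModel z t' v a i j)) ≤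
      klD (c a i j) (ntfModel z t v a i j) := by
    intro a i j
    have hmpos := hm a i j
    have hm'pos := hm' a i j
    rcases (hc a i j).eq_or_lt with hq | hq
    · simp only [klD, ← hq, zero_mul, zero_add, zero_div]
      linarith
    · have hlog : Real.log (c a i j / ntfModel z t v a i j) -
          Real.log (c a i j / ntfModel z t' v a i j) =
          Real.log (ntfModel z t' v a i j / ntfModel z t v a i j) := by
        rw [Real.log_div hq.ne' hmpos.ne', Real.log_div hq.ne' hm'pos.ne',
          Real.log_div hm'pos.ne' hmpos.ne']
        ring
      have hj := mul_le_mul_of_nonneg_left (jensen a i j) hq.le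
      simp only [klD]
      nlinarith [hj, hlog]
  -- Sum the key inequality
  have hsum := Finset.sum_le_sum (fun a (_ : a ∈ Finset.univ) =>
    Finset.sum_le_sum (fun i (_ : i ∈ Finset.univ) =>
      Finset.sum_le_sum (fun j (_ : j ∈ Finset.univ) => key a i j)))
  rw [show (∑ a, ∑ i, ∑ j, (klD (c a i j) (ntfModel z t' v a i j) +
      (c a i j * (∑ k, z a k * t i k * v j k / ntfModel z t v a i j *
        Real.log (t' i k / t i k)) +
        (ntfModel z t v a i j - ntfModel z t' v a i j)))) =
      (∑ a, ∑ i, ∑ j, klD (c a i j) (ntfModel z t' v a i j)) +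
      ((∑ a, ∑ i, ∑ j, c a i j * (∑ k, z a k * t i k * v j k / ntfModel z t v a i j *
        Real.log (t' i k / t i k))) +
       (∑ a, ∑ i, ∑ j, (ntfModel z t v a i j - ntfModel z t' v a i j))) by
    simp only [Finset.sum_add_distrib]] at hsum
  -- Now show the correction term is nonnegative
  have hT1 : (∑ a, ∑ i, ∑ j, c a i j * (∑ k, z a k * t i k * v j k / ntfModel z t v a i j *
      Real.log (t' i k / t i k))) =
      ∑ i, ∑ k, Real.log (t' i k / t i k) * (t i k * S i k) := by
    simp only [Finset.mul_sum]
    rw [sum_comm4 (fun a i j k => c a i j * (z a k * t i k * v j k / ntfModel z t v a i j *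
      Real.log (t' i k / t i k)))]
    refine Finset.sum_congr rfl fun i _ => Finset.sum_congr rfl fun k _ => ?_
    rw [hSdef]
    simp only [Finset.mul_sum]
    refine Finset.sum_congr rfl fun a _ => Finset.sum_congr rfl fun j _ => ?_
    ring
  have hT2 : (∑ a, ∑ i, ∑ j, (ntfModel z t v a i j - ntfModel z t' v a i j)) =
      ∑ i, ∑ k, (t i k - t' i k) * W k := by
    have : ∀ a i j, ntfModel z t v a i j - ntfModel z t' v a i j =
        ∑ k, (z a k * t i k * v j k - z a k * t' i k * v j k) := by
      intro a i j
      rw [Finset.sum_sub_distrib]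
      rfl
    simp only [this]
    rw [sum_comm4 (fun a i j k => z a k * t i k * v j k - z a k * t' i k * v j k)]
    refine Finset.sum_congr rfl fun i _ => Finset.sum_congr rfl fun k _ => ?_
    rw [hWdef]
    simp only [Finset.mul_sum]
    refine Finset.sum_congr rfl fun a _ => Finset.sum_congr rfl fun j _ => ?_
    ring
  have hTnonneg : 0 ≤ (∑ a, ∑ i, ∑ j, c a i j * (∑ k, z a k * t i k * v j k /
      ntfModel z t v a i j * Real.log (t' i k / t i k))) +
      (∑ a, ∑ i, ∑ j, (ntfModel z t v a i j - ntfModel z t' v a i j)) := by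
    rw [hT1, hT2, ← Finset.sum_add_distrib]
    refine Finset.sum_nonneg fun i _ => ?_
    rw [← Finset.sum_add_distrib]
    refine Finset.sum_nonneg fun k _ => ?_
    have hWk := hW k
    have htik := ht i k
    have hSik := hS i k
    set r := S i k / W k with hrdef
    have hrpos : 0 < r := div_pos hSik hWk
    have hlograt : t' i k / t i k = r := by
      rw [ht'eq i k, hrdef, div_div, mul_comm (W k) (t i k),
        mul_div_mul_left _ _ htik.ne']
    have h1 : t' i k = t i k * r := by
      rw [ht'eq i k, hrdef, mul_div_assoc]
    have h2 : S i k = r * W k := by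
      rw [hrdef, div_mul_cancel₀ _ hWk.ne']
    have hexpr : Real.log (t' i k / t i k) * (t i k * S i k) +
        (t i k - t' i k) * W k =
        t i k * W k * (r * Real.log r - r + 1) := by
      rw [hlograt, h1, h2]
      ring
    rw [hexpr]
    exact mul_nonneg (by positivity) (rlogr_nonneg hrpos)
  linarith
end

section
/- Majorization of the regularized cost: with all entries of z, t, v strictly positive, c entrywise nonnegative, p entrywise nonnegative, μ ≥ 0, an assignment b : Fin K → Fin B, and any auxiliary weights α : Fin A → Fin I → Fin J → Fin K → ℝ with α(a,i,j,k) > 0 and ∑_{k} α(a,i,j,k) = 1 for all (a,i,j), define J⁺(z,t,v,b,α) = ∑_{a,i,j} [ c(a,i,j)·log c(a,i,j) − c(a,i,j) − c(a,i,j)·∑_{k} α(a,i,j,k)·log( z(a,k)·t(i,k)·v(j,k) / α(a,i,j,k) ) + m(a,i,j) ] + μ·∑_{k} ∑_{a} D(p(b(k),a) | z(a,k)) (with the convention c·log c = 0 at c = 0). Then J(z,t,v,b) ≤ J⁺(z,t,v,b,α) for every such α, and equality holds when α(a,i,j,k) = z(a,k)·t(i,k)·v(j,k) / m(a,i,j)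 for all (a,i,j,k). -/
open Finset Real

/-- Surrogate (majorizing) function `J⁺` built from auxiliary weights `α`
(with the convention `c·log c = 0` at `c = 0`, automatic since `Real.log 0 = 0`). -/
noncomputable def ntfCostPlus {A I J K B : ℕ}
    (c : Fin A → Fin I → Fin J → ℝ) (μ : ℝ) (p : Fin B → Fin A → ℝ)
    (z : Fin A → Fin K → ℝ) (t : Fin I → Fin K → ℝ) (v : Fin J → Fin K → ℝ)
    (b : Fin K → Fin B)
    (α : Fin A → Fin I → Fin J → Fin K → ℝ) : ℝ :=
  (∑ a, ∑ i, ∑ j,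
      (c a i j * Real.log (c a i j) - c a i j
        - c a i j * ∑ k, α a i j k * Real.log (z a k * t i k * v j k / α a i j k)
        + ntfModel z t v a i j)) +
    μ * ∑ k, ∑ a, klD (p (b k) a) (z a k)

/- The data term of `J` is, entrywise, `c log c − c − c log m + m`, and the concavity
of `log` (Jensen with weights `α`) gives `∑_k α_k log(x_k / α_k) ≤ log ∑_k x_k = log m` for the
positive summands `x_k = z(a,k) t(i,k) v(j,k)` of `m`; multiplying by `c ≥ 0` yields `J ≤ J⁺`.
For `α_k = x_k / m` every ratio `x_k / α_k` equals `m`, so Jensen is an equality. -/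

lemma klD_eq_of_ne_zero (q : ℝ) {a : ℝ} (ha : a ≠ 0) :
    klD q a = q * Real.log q - q * Real.log a + a - q := by
  rcases eq_or_ne q 0 with rfl | hq
  · simp [klD]
  · rw [klD, Real.log_div hq ha]
    ring

section Jensen

variable {ι : Type*} [Fintype ι] {w x : ι → ℝ}

lemma sum_mul_log_div_le_log_sum (hw : ∀ i, 0 < w i) (hx : ∀ i, 0 < x i)
    (hw_sum : ∑ i, w i = 1) :
    ∑ i, w i * Real.log (x i / w i) ≤ Real.log (∑ i, x i) := by
  have hJensen := strictConcaveOn_log_Ioi.concaveOn.le_map_sum (t := univ)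
    (p := fun i => x i / w i) (fun i _ => (hw i).le) hw_sum (fun i _ => div_pos (hx i) (hw i))
  simpa only [smul_eq_mul, mul_div_cancel₀ _ (hw _).ne'] using hJensen

lemma sum_mul_log_div_eq_log_sum (hx : ∀ i, x i ≠ 0) (hw : ∀ i, w i = x i / ∑ j, x j)
    (hw_sum : ∑ i, w i = 1) :
    ∑ i, w i * Real.log (x i / w i) = Real.log (∑ i, x i) := by
  have hx_sum : ∑ i, x i / ∑ j, x j = 1 := by simpa only [hw] using hw_sum
  simp only [hw, div_div_cancel₀ (hx _)]
  rw [← sum_mul, hx_sum, one_mul]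

end Jensen

section Majorization

variable {ι : Type*} [Fintype ι] {q : ℝ} {w x : ι → ℝ}

lemma klD_le_surrogate (hq : 0 ≤ q) (hw : ∀ i, 0 < w i) (hx : ∀ i, 0 < x i)
    (hw_sum : ∑ i, w i = 1) :
    klD q (∑ i, x i) ≤
      q * Real.log q - q - q * ∑ i, w i * Real.log (x i / w i) + ∑ i, x i := by
  have hS : ∑ i, x i ≠ 0 :=
    (sum_pos (fun i _ => hx i) (nonempty_of_sum_ne_zero (hw_sum ▸ one_ne_zero))).ne'
  rw [klD_eq_of_ne_zero q hS]
  have := mul_le_mul_of_nonneg_left (sum_mul_log_div_le_log_sum hw hx hw_sum) hq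
  linarith

lemma klD_eq_surrogate (hx : ∀ i, x i ≠ 0) (hw : ∀ i, w i = x i / ∑ j, x j)
    (hw_sum : ∑ i, w i = 1) :
    klD q (∑ i, x i) =
      q * Real.log q - q - q * ∑ i, w i * Real.log (x i / w i) + ∑ i, x i := by
  have hS : ∑ i, x i ≠ 0 := fun h => by simp [hw, h] at hw_sum
  rw [klD_eq_of_ne_zero q hS, sum_mul_log_div_eq_log_sum hx hw hw_sum]
  ring

end Majorization

theorem stmt9_general (A I J K B : ℕ)
    (z : Fin A → Fin K → ℝ) (t : Fin I → Fin K → ℝ) (v : Fin J → Fin K → ℝ)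
    (hz : ∀ a k, 0 < z a k) (ht : ∀ i k, 0 < t i k) (hv : ∀ j k, 0 < v j k)
    (c : Fin A → Fin I → Fin J → ℝ) (hc : ∀ a i j, 0 ≤ c a i j)
    (p : Fin B → Fin A → ℝ)
    (μ : ℝ)
    (b : Fin K → Fin B)
    (α : Fin A → Fin I → Fin J → Fin K → ℝ)
    (hα : ∀ a i j k, 0 < α a i j k)
    (hαsum : ∀ a i j, ∑ k, α a i j k = 1) :
    ntfCost c μ p z t v b ≤ ntfCostPlus c μ p z t v b α ∧
    ((∀ a i j k, α a i j k = z a k * t i k * v j k / ntfModel z t v a i j) →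
      ntfCost c μ p z t v b = ntfCostPlus c μ p z t v b α) := by
  have hx : ∀ a i j k, 0 < z a k * t i k * v j k := fun a i j k =>
    mul_pos (mul_pos (hz a k) (ht i k)) (hv j k)
  refine ⟨?_, fun hα_eq => ?_⟩
  · unfold ntfCost ntfCostPlus
    gcongr with a _ i _ j _
    exact klD_le_surrogate (hc a i j) (hα a i j) (hx a i j) (hαsum a i j)
  · unfold ntfCost ntfCostPlus
    congr 1
    refine sum_congr rfl fun a _ => sum_congr rfl fun i _ => sum_congr rfl fun j _ => ?_
    exact klD_eq_surrogate (fun k => (hx a i j k).ne') (hα_eq a i j) (hαsum a i j)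

/-- Majorization of the regularized cost: `J ≤ J⁺` for any admissible auxiliary
weights `α`, with equality when `α(a,i,j,k) = z(a,k)·t(i,k)·v(j,k)/m(a,i,j)`. -/
theorem stmt9 (A I J K B : ℕ)
    (z : Fin A → Fin K → ℝ) (t : Fin I → Fin K → ℝ) (v : Fin J → Fin K → ℝ)
    (hz : ∀ a k, 0 < z a k) (ht : ∀ i k, 0 < t i k) (hv : ∀ j k, 0 < v j k)
    (c : Fin A → Fin I → Fin J → ℝ) (hc : ∀ a i j, 0 ≤ c a i j)
    (p : Fin B → Fin A → ℝ) (hp : ∀ b a, 0 ≤ p b a)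
    (μ : ℝ) (hμ : 0 ≤ μ)
    (b : Fin K → Fin B)
    (α : Fin A → Fin I → Fin J → Fin K → ℝ)
    (hα : ∀ a i j k, 0 < α a i j k)
    (hαsum : ∀ a i j, ∑ k, α a i j k = 1) :
    ntfCost c μ p z t v b ≤ ntfCostPlus c μ p z t v b α ∧
    ((∀ a i j k, α a i j k = z a k * t i k * v j k / ntfModel z t v a i j) →
      ntfCost c μ p z t v b = ntfCostPlus c μ p z t v b α) :=
  stmt9_general A I J K B z t v hz ht hv c hc p μ b α hα hαsum
end
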